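/- arXiv:1812.09107 — 5 statements merged into one kernel-verified Lean document; each statement's English description precedes it below -/
import Mathlib

section
/- Each function ρ_i is strictly convex along any line segment in [0,∞)^k whose direction has a nonzero component in a coordinate j with χ_{ij} > 0; in particular, if z¹ and z² are two distinct zeros of all the ρ_i's and z¹_{i₀} ≠ z²_{i₀} for some i₀, then ρ_{i₀}(θ z¹ + (1-θ) z²) < 0 for all θ ∈ (0,1). -/
/-- If `z¹, z²` are distinct zeros of all the `ρ_i` with `z¹_{i₀} ≠ z²_{i₀}`, then
`ρ_{i₀}` is strictly negative on the open segment between them. -/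
theorem stmt_5 (r k : ℕ) (hr : 2 ≤ r) (hk : 1 ≤ k)
    (χ : Matrix (Fin k) (Fin k) ℝ) (hχ : ∀ i j, 0 ≤ χ i j) (hχd : ∀ i, χ i i = 1)
    (α : Fin k → ℝ) (hα : ∀ i, 0 ≤ α i)
    (ρ : Fin k → (Fin k → ℝ) → ℝ)
    (hρ : ∀ i x, ρ i x =
      α i - x i + (1 / (r : ℝ)) * (1 - 1 / (r : ℝ)) ^ (r - 1) * (∑ j, χ i j * x j) ^ r)
    (z₁ z₂ : Fin k → ℝ) (hz₁ : ∀ i, 0 ≤ z₁ i) (hz₂ : ∀ i, 0 ≤ z₂ i)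
    (hρz₁ : ∀ i, ρ i z₁ = 0) (hρz₂ : ∀ i, ρ i z₂ = 0)
    (i₀ : Fin k) (hne : z₁ i₀ ≠ z₂ i₀) :
    ∀ θ : ℝ, θ ∈ Set.Ioo (0 : ℝ) 1 → ρ i₀ (fun j => θ * z₁ j + (1 - θ) * z₂ j) < 0 := by
  intro θ hθ
  obtain ⟨hθ0, hθ1⟩ := hθ
  set c : ℝ := (1 / (r : ℝ)) * (1 - 1 / (r : ℝ)) ^ (r - 1) with hc
  have hr0 : (0:ℝ) < r := by
    have : (2:ℝ) ≤ r := by exact_mod_cast hr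
    linarith
  have hc0 : 0 < c := by
    apply mul_pos (by positivity)
    apply pow_pos
    have h1r : (1:ℝ)/r < 1 := by
      rw [div_lt_one hr0]
      have : (2:ℝ) ≤ r := by exact_mod_cast hr
      linarith
    linarith
  set s₁ : ℝ := ∑ j, χ i₀ j * z₁ j with hs₁def
  set s₂ : ℝ := ∑ j, χ i₀ j * z₂ j with hs₂def
  have hs₁ : 0 ≤ s₁ := Finset.sum_nonneg fun j _ => mul_nonneg (hχ _ _) (hz₁ j)
  have hs₂ : 0 ≤ s₂ := Finset.sum_nonneg fun j _ => mul_nonneg (hχ _ _) (hz₂ j)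
  have h1 : α i₀ - z₁ i₀ + c * s₁ ^ r = 0 := by
    have := hρz₁ i₀; rw [hρ] at this; linarith [this]
  have h2 : α i₀ - z₂ i₀ + c * s₂ ^ r = 0 := by
    have := hρz₂ i₀; rw [hρ] at this; linarith [this]
  have hsne : s₁ ≠ s₂ := by
    intro h
    apply hne
    rw [h] at h1
    linarith
  have hconv := (strictConvexOn_pow hr).2 (Set.mem_Ici.2 hs₁) (Set.mem_Ici.2 hs₂)
    hsne hθ0 (show (0:ℝ) < 1 - θ by linarith) (show θ + (1 - θ) = 1 by ring)
  simp only [smul_eq_mul] at hconv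
  have hsum : ∑ j, χ i₀ j * (θ * z₁ j + (1 - θ) * z₂ j) = θ * s₁ + (1 - θ) * s₂ := by
    rw [hs₁def, hs₂def, Finset.mul_sum, Finset.mul_sum, ← Finset.sum_add_distrib]
    exact Finset.sum_congr rfl fun j _ => by ring
  rw [hρ]
  simp only [hsum]
  have h3 : c * (θ * s₁ + (1 - θ) * s₂) ^ r < c * (θ * s₁ ^ r + (1 - θ) * s₂ ^ r) :=
    (mul_lt_mul_iff_right₀ hc0).2 hconv
  nlinarith [h3]
end

section
/- If there exists x in D with ρ(x) ≤ 0 componentwise and ρ(x) ≠ 0, then there exists x' in D with ρ_i(x') < 0 for all i. (Condition (Sub)''' implies condition (Sub).) -/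
/-- A `k×k` matrix is irreducible if some power connects every pair of indices. -/
def MatIrreducible {k : ℕ} (χ : Matrix (Fin k) (Fin k) ℝ) : Prop :=
  ∀ i j, ∃ m : ℕ, 0 < (χ ^ m) i j

lemma matpow_nonneg {k : ℕ} (χ : Matrix (Fin k) (Fin k) ℝ) (hχ : ∀ i j, 0 ≤ χ i j) :
    ∀ (m : ℕ) (i j), 0 ≤ (χ ^ m) i j := by
  intro m
  induction m with
  | zero =>
    intro i j
    rw [pow_zero, Matrix.one_apply]
    split <;> norm_num
  | succ m ih =>
    intro i j
    rw [pow_succ, Matrix.mul_apply]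
    exact Finset.sum_nonneg fun l _ => mul_nonneg (ih i l) (hχ l j)

lemma mat_reach {k : ℕ} (χ : Matrix (Fin k) (Fin k) ℝ) (hχ : ∀ i j, 0 ≤ χ i j)
    (T : Set (Fin k)) (hT : ∀ a ∈ T, ∀ b, 0 < χ a b → b ∈ T) :
    ∀ (m : ℕ) (i j), i ∈ T → 0 < (χ ^ m) i j → j ∈ T := by
  intro m
  induction m with
  | zero =>
    intro i j hi hpos
    rcases eq_or_ne i j with h | h
    · exact h ▸ hi
    · rw [pow_zero, Matrix.one_apply_ne h] at hpos
      exact absurd hpos (lt_irrefl 0)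
  | succ m ih =>
    intro i j hi hpos
    rw [pow_succ', Matrix.mul_apply] at hpos
    obtain ⟨l, hl⟩ : ∃ l, 0 < χ i l * (χ ^ m) l j := by
      by_contra hcon
      push_neg at hcon
      have hs : (∑ l, χ i l * (χ ^ m) l j) ≤ 0 := Finset.sum_nonpos fun l _ => hcon l
      exact absurd hpos (not_lt.mpr hs)
    have h1 : 0 < χ i l := by
      rcases (hχ i l).lt_or_eq with h | h
      · exact h
      · rw [← h, zero_mul] at hl; exact absurd hl (lt_irrefl 0)
    have h2 : 0 < (χ ^ m) l j := by
      rcases (matpow_nonneg χ hχ m l j).lt_or_eq with h | h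
      · exact h
      · rw [← h, mul_zero] at hl; exact absurd hl (lt_irrefl 0)
    exact ih l j (hT i hi l h1) h2

/-- (Sub)''' implies (Sub): if there is `x ∈ D` with `ρ(x) ≤ 0` componentwise and
`ρ(x) ≠ 0`, then there is `x' ∈ D` with `ρ_i(x') < 0` for all `i`. -/
theorem stmt_7 (r k : ℕ) (hr : 2 ≤ r) (hk : 1 ≤ k)
    (χ : Matrix (Fin k) (Fin k) ℝ) (hχ : ∀ i j, 0 ≤ χ i j) (hχd : ∀ i, χ i i = 1)
    (hirr : MatIrreducible χ) (hsym : ∀ i j, χ i j = 0 ↔ χ j i = 0)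
    (α : Fin k → ℝ) (hα : ∀ i, 0 ≤ α i) (hα0 : ∃ i, 0 < α i)
    (ρ : Fin k → (Fin k → ℝ) → ℝ)
    (hρ : ∀ i x, ρ i x =
      α i - x i + (1 / (r : ℝ)) * (1 - 1 / (r : ℝ)) ^ (r - 1) * (∑ j, χ i j * x j) ^ r)
    (D : Set (Fin k → ℝ))
    (hD : D = {x | (∀ i, x i ∈ Set.Icc (0 : ℝ) ((r : ℝ) / ((r : ℝ) - 1))) ∧
      ∀ i, x i + ∑ j ∈ Finset.univ.erase i, χ i j * x j ≤ (r : ℝ) / ((r : ℝ) - 1)})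
    (x : Fin k → ℝ) (hxD : x ∈ D)
    (hle : ∀ i, ρ i x ≤ 0) (hne : ∃ i, ρ i x ≠ 0) :
    ∃ x' ∈ D, ∀ i, ρ i x' < 0 := by
  have hr2 : (2:ℝ) ≤ (r:ℝ) := by exact_mod_cast hr
  set c : ℝ := 1 / (r:ℝ) * (1 - 1 / (r:ℝ)) ^ (r - 1) with hc
  have hrinv : 1 / (r:ℝ) < 1 := by
    rw [div_lt_one (by linarith)]; linarith
  have hcpos : 0 < c := by
    rw [hc]
    exact mul_pos (by positivity) (pow_pos (by linarith) _)
  -- basic facts about D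
  have hD1 : ∀ y, y ∈ D → ∀ l, 0 ≤ y l := by
    intro y hy l
    rw [hD] at hy
    exact (Set.mem_Icc.mp (hy.1 l)).1
  have hDmono : ∀ y z, y ∈ D → (∀ l, 0 ≤ z l) → (∀ l, z l ≤ y l) → z ∈ D := by
    intro y z hy hz0 hzy
    rw [hD] at hy ⊢
    obtain ⟨hy1, hy2⟩ := hy
    refine ⟨fun l => Set.mem_Icc.mpr ⟨hz0 l, le_trans (hzy l) (Set.mem_Icc.mp (hy1 l)).2⟩,
      fun l => le_trans ?_ (hy2 l)⟩
    exact add_le_add (hzy l)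
      (Finset.sum_le_sum fun m _ => mul_le_mul_of_nonneg_left (hzy m) (hχ l m))
  have key : ∀ n : ℕ, ∀ y : Fin k → ℝ, y ∈ D → (∀ l, ρ l y ≤ 0) →
      ((Finset.univ.filter fun l => ¬ ρ l y < 0).card ≤ n) → (∃ l, ρ l y < 0) →
      ∃ x' ∈ D, ∀ l, ρ l x' < 0 := by
    intro n
    induction n with
    | zero =>
      intro y hyD hyle hcard _
      refine ⟨y, hyD, fun l => ?_⟩
      by_contra h
      have hmem : l ∈ Finset.univ.filter fun l => ¬ ρ l y < 0 :=
        Finset.mem_filter.mpr ⟨Finset.mem_univ l, h⟩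
      have := Finset.card_pos.mpr ⟨l, hmem⟩
      omega
    | succ n ih =>
      intro y hyD hyle hcard hex
      by_cases hall : ∀ l, ρ l y < 0
      · exact ⟨y, hyD, hall⟩
      push_neg at hall
      obtain ⟨j0, hj0⟩ := hall
      obtain ⟨i0, hi0⟩ := hex
      have hedge : ∃ i j, ρ i y < 0 ∧ 0 ≤ ρ j y ∧ 0 < χ j i := by
        by_contra hno
        push_neg at hno
        have hclosed : ∀ a ∈ {l | ρ l y < 0}, ∀ b, 0 < χ a b → b ∈ {l | ρ l y < 0} := by
          intro a ha b hab
          by_contra hb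
          simp only [Set.mem_setOf_eq] at ha hb
          push_neg at hb
          have h0 : χ b a = 0 := le_antisymm (hno a b ha hb) (hχ b a)
          have h0' : χ a b = 0 := (hsym b a).mp h0
          rw [h0'] at hab
          exact absurd hab (lt_irrefl 0)
        obtain ⟨m, hm⟩ := hirr i0 j0
        have hmem := mat_reach χ hχ _ hclosed m i0 j0 hi0 hm
        simp only [Set.mem_setOf_eq] at hmem
        linarith
      obtain ⟨i, j, hi, hj, hji⟩ := hedge
      have hij : j ≠ i := by intro h; rw [h] at hj; linarith
      have hSynn : ∀ l, 0 ≤ ∑ m, χ l m * y m := fun l =>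
        Finset.sum_nonneg fun m _ => mul_nonneg (hχ l m) (hD1 y hyD m)
      have hyi : 0 < y i := by
        have h := hρ i y
        have hP : 0 ≤ c * (∑ m, χ i m * y m) ^ r :=
          mul_nonneg hcpos.le (pow_nonneg (hSynn i) r)
        rw [hρ i y] at hi
        linarith [hα i]
      have hiy : ρ i y < 0 := by rw [hρ i y]; rw [hρ i y] at hi; exact hi
      set δ := min (y i) (-(ρ i y)) / 2 with hδdef
      have hmin : 0 < min (y i) (-(ρ i y)) := lt_min hyi (by linarith)
      have hδpos : 0 < δ := by rw [hδdef]; linarith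
      have hδi : δ ≤ y i := by
        have h1 := min_le_left (y i) (-(ρ i y))
        rw [hδdef]; linarith
      have hδρ : 2 * δ ≤ -(ρ i y) := by
        have h1 := min_le_right (y i) (-(ρ i y))
        rw [hδdef]; linarith
      set x' : Fin k → ℝ := Function.update y i (y i - δ) with hx'def
      have hx'i : x' i = y i - δ := by rw [hx'def, Function.update_self]
      have hx'ne : ∀ l, l ≠ i → x' l = y l := by
        intro l h; rw [hx'def, Function.update_of_ne h]
      have hx'le : ∀ l, x' l ≤ y l := by
        intro l
        by_cases h : l = i
        · rw [h, hx'i]; linarith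
        · rw [hx'ne l h]
      have hx'0 : ∀ l, 0 ≤ x' l := by
        intro l
        by_cases h : l = i
        · rw [h, hx'i]; linarith
        · rw [hx'ne l h]; exact hD1 y hyD l
      have hx'D : x' ∈ D := hDmono y x' hyD hx'0 hx'le
      have hSdiff : ∀ l, (∑ m, χ l m * x' m) = (∑ m, χ l m * y m) - χ l i * δ := by
        intro l
        have h1 : ∀ m : Fin k,
            χ l m * x' m = χ l m * y m - (if m = i then χ l i * δ else 0) := by
          intro m
          by_cases h : m = i
          · subst h; rw [hx'i]; simp [mul_sub]
          · rw [hx'ne m h]; simp [h]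
        simp_rw [h1]
        rw [Finset.sum_sub_distrib, Finset.sum_ite_eq' Finset.univ i]
        simp
      have hS'nn : ∀ l, 0 ≤ ∑ m, χ l m * x' m := fun l =>
        Finset.sum_nonneg fun m _ => mul_nonneg (hχ l m) (hx'0 m)
      have hS'le : ∀ l, (∑ m, χ l m * x' m) ≤ ∑ m, χ l m * y m := by
        intro l
        rw [hSdiff l]
        have := mul_nonneg (hχ l i) hδpos.le
        linarith
      have hpowle : ∀ l, (∑ m, χ l m * x' m) ^ r ≤ (∑ m, χ l m * y m) ^ r := fun l =>
        pow_le_pow_left₀ (hS'nn l) (hS'le l) r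
      have hρi' : ρ i x' < 0 := by
        have h1 : c * (∑ m, χ i m * x' m) ^ r ≤ c * (∑ m, χ i m * y m) ^ r :=
          mul_le_mul_of_nonneg_left (hpowle i) hcpos.le
        rw [hρ i x', hx'i]
        have h2 := hρ i y
        linarith
      have hρj' : ρ j x' < 0 := by
        have hSlt : (∑ m, χ j m * x' m) < ∑ m, χ j m * y m := by
          rw [hSdiff j]
          have := mul_pos hji hδpos
          linarith
        have hplt : (∑ m, χ j m * x' m) ^ r < (∑ m, χ j m * y m) ^ r :=
          pow_lt_pow_left₀ hSlt (hS'nn j) (by omega)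
        have h1 : c * (∑ m, χ j m * x' m) ^ r < c * (∑ m, χ j m * y m) ^ r :=
          mul_lt_mul_of_pos_left hplt hcpos
        rw [hρ j x', hx'ne j hij]
        have h2 := hρ j y
        have h3 := hyle j
        linarith
      have hmono' : ∀ l, l ≠ i → ρ l x' ≤ ρ l y := by
        intro l hl
        have h1 : c * (∑ m, χ l m * x' m) ^ r ≤ c * (∑ m, χ l m * y m) ^ r :=
          mul_le_mul_of_nonneg_left (hpowle l) hcpos.le
        rw [hρ l x', hρ l y, hx'ne l hl]
        linarith
      have hle' : ∀ l, ρ l x' ≤ 0 := by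
        intro l
        by_cases h : l = i
        · exact h ▸ hρi'.le
        · exact le_trans (hmono' l h) (hyle l)
      have hjold : j ∈ Finset.univ.filter fun l => ¬ ρ l y < 0 :=
        Finset.mem_filter.mpr ⟨Finset.mem_univ j, not_lt.mpr hj⟩
      have hsub : (Finset.univ.filter fun l => ¬ ρ l x' < 0) ⊆
          (Finset.univ.filter fun l => ¬ ρ l y < 0).erase j := by
        intro l hl
        rw [Finset.mem_filter] at hl
        have hl' := hl.2
        rw [Finset.mem_erase, Finset.mem_filter]
        refine ⟨fun h => hl' (h ▸ hρj'), Finset.mem_univ l, fun hlt => ?_⟩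
        by_cases h : l = i
        · exact hl' (h ▸ hρi')
        · exact hl' (lt_of_le_of_lt (hmono' l h) hlt)
      have hcard' : (Finset.univ.filter fun l => ¬ ρ l x' < 0).card ≤ n := by
        have h1 := Finset.card_le_card hsub
        rw [Finset.card_erase_of_mem hjold] at h1
        have h2 := Finset.card_pos.mpr ⟨j, hjold⟩
        omega
      exact ih x' hx'D hle' hcard' ⟨j, hρj'⟩
  obtain ⟨i1, hi1⟩ := hne
  exact key _ x hxD hle le_rfl ⟨i1, lt_of_le_of_ne (hle i1) hi1⟩
end

section
/- Let U_j, j = 1,...,k, be natural numbers and q_j ∈ [0,1] with U_j·q_j → 0 and U_j → ∞ as n → ∞. Then P(∑_{j=1}^k Bin(U_j, q_j) ≥ r) = (1 + O(∑_j (U_j q_j + U_j^{-1})))·(∑_{j=1}^k U_j q_j)^r / r!, where the binomials are independent. -/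
open Filter

/-- `P(Bin(u,q) = j)`. -/
noncomputable def binomPMF (u : ℕ) (q : ℝ) (j : ℕ) : ℝ :=
  (u.choose j : ℝ) * q ^ j * (1 - q) ^ (u - j)

/-- `P(∑_{j=1}^k Bin(U_j, q_j) ≥ r)` for independent binomials. -/
noncomputable def sumBinomTail (k : ℕ) (U : Fin k → ℕ) (q : Fin k → ℝ) (r : ℕ) : ℝ :=
  ∑ m ∈ (Fintype.piFinset (fun j => Finset.range (U j + 1))).filter
      (fun m => r ≤ ∑ j, m j),
    ∏ j, binomPMF (U j) (q j) (m j)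

open Finset

lemma binomPMF_nonneg (u : ℕ) {q : ℝ} (m : ℕ) (h0 : 0 ≤ q) (h1 : q ≤ 1) :
    0 ≤ binomPMF u q m := by
  unfold binomPMF
  have : (0:ℝ) ≤ 1 - q := by linarith
  positivity

lemma binomPMF_le (u m : ℕ) {q : ℝ} (h0 : 0 ≤ q) (h1 : q ≤ 1) :
    binomPMF u q m ≤ ((u:ℝ) * q) ^ m / (m.factorial : ℝ) := by
  have hc : (u.choose m : ℝ) ≤ (u:ℝ) ^ m / (m.factorial : ℝ) := by
    rw [le_div_iff₀ (by positivity)]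
    have h := Nat.descFactorial_le_pow u m
    rw [Nat.descFactorial_eq_factorial_mul_choose] at h
    calc (u.choose m : ℝ) * (m.factorial : ℝ)
        = ((m.factorial * u.choose m : ℕ) : ℝ) := by push_cast; ring
      _ ≤ ((u ^ m : ℕ) : ℝ) := by exact_mod_cast h
      _ = (u:ℝ) ^ m := by push_cast; ring
  have h2 : (1 - q) ^ (u - m) ≤ 1 := pow_le_one₀ (by linarith) (by linarith)
  have hq : (0:ℝ) ≤ q ^ m := pow_nonneg h0 m
  calc binomPMF u q m ≤ (u.choose m : ℝ) * q ^ m * 1 := by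
        unfold binomPMF
        exact mul_le_mul_of_nonneg_left h2 (by positivity)
    _ = (u.choose m : ℝ) * q ^ m := by ring
    _ ≤ ((u:ℝ) ^ m / (m.factorial : ℝ)) * q ^ m := mul_le_mul_of_nonneg_right hc hq
    _ = ((u:ℝ) * q) ^ m / (m.factorial : ℝ) := by rw [mul_pow]; ring

lemma binomPMF_ge (r u m : ℕ) {q : ℝ} (h0 : 0 ≤ q) (h1 : q ≤ 1) (hm : m ≤ r)
    (hr1 : 1 ≤ r) (hru : r ≤ u)
    (ha : (r:ℝ)^2 / (u:ℝ) ≤ 1) (hb : (u:ℝ) * q ≤ 1) :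
    ((u:ℝ) * q) ^ m / (m.factorial : ℝ) * (1 - (r:ℝ)^2 / (u:ℝ) - (u:ℝ) * q)
      ≤ binomPMF u q m := by
  have hu1 : 1 ≤ u := le_trans hr1 hru
  have hu0 : (0:ℝ) < (u:ℝ) := by exact_mod_cast Nat.lt_of_lt_of_le Nat.zero_lt_one hu1
  -- descFactorial lower bound in ℕ
  have hA : ((u - r : ℕ) : ℝ) ^ m ≤ (u.choose m : ℝ) * (m.factorial : ℝ) := by
    have h1' : (u - r) ^ m ≤ (u + 1 - m) ^ m :=
      Nat.pow_le_pow_left (by omega) m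
    have h2' : (u + 1 - m) ^ m ≤ u.descFactorial m := Nat.pow_sub_le_descFactorial u m
    have h3' : (u - r) ^ m ≤ m.factorial * u.choose m := by
      rw [← Nat.descFactorial_eq_factorial_mul_choose]; omega
    calc ((u - r : ℕ) : ℝ) ^ m = (((u - r) ^ m : ℕ) : ℝ) := by push_cast; ring
      _ ≤ ((m.factorial * u.choose m : ℕ) : ℝ) := by exact_mod_cast h3'
      _ = (u.choose m : ℝ) * (m.factorial : ℝ) := by push_cast; ring
  have hcast : ((u - r : ℕ) : ℝ) = (u:ℝ) - (r:ℝ) := by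
    push_cast [Nat.cast_sub hru]; ring
  have hB : (u:ℝ) ^ m * (1 - (r:ℝ)^2 / (u:ℝ)) ≤ ((u - r : ℕ) : ℝ) ^ m := by
    rw [hcast]
    have hxy : (u:ℝ) - (r:ℝ) = (u:ℝ) * (1 + (-((r:ℝ)/(u:ℝ)))) := by
      field_simp
      ring
    have hru' : (r:ℝ)/(u:ℝ) ≤ 1 := by
      rw [div_le_one hu0]; exact_mod_cast hru
    have hbern : 1 + (m:ℝ) * (-((r:ℝ)/(u:ℝ))) ≤ (1 + (-((r:ℝ)/(u:ℝ)))) ^ m := by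
      apply one_add_mul_le_pow
      linarith
    have hm' : (m:ℝ) * ((r:ℝ)/(u:ℝ)) ≤ (r:ℝ)^2/(u:ℝ) := by
      have hmr : (m:ℝ) ≤ (r:ℝ) := by exact_mod_cast hm
      have hx0 : (0:ℝ) ≤ (r:ℝ)/(u:ℝ) := by positivity
      calc (m:ℝ) * ((r:ℝ)/(u:ℝ)) ≤ (r:ℝ) * ((r:ℝ)/(u:ℝ)) :=
            mul_le_mul_of_nonneg_right hmr hx0
        _ = (r:ℝ)^2/(u:ℝ) := by ring
    calc (u:ℝ) ^ m * (1 - (r:ℝ)^2 / (u:ℝ))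
        ≤ (u:ℝ) ^ m * (1 + (m:ℝ) * (-((r:ℝ)/(u:ℝ)))) := by
          apply mul_le_mul_of_nonneg_left _ (by positivity)
          have heq : (m:ℝ) * (-((r:ℝ)/(u:ℝ))) = -((m:ℝ) * ((r:ℝ)/(u:ℝ))) := by ring
          rw [heq]; linarith
      _ ≤ (u:ℝ) ^ m * (1 + (-((r:ℝ)/(u:ℝ)))) ^ m :=
          mul_le_mul_of_nonneg_left hbern (by positivity)
      _ = ((u:ℝ) - (r:ℝ)) ^ m := by rw [hxy, mul_pow]
  have hC : 1 - (u:ℝ) * q ≤ (1 - q) ^ (u - m) := by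
    have hq1 : (0:ℝ) ≤ 1 - q := by linarith
    have h1' : (1 - q) ^ u ≤ (1 - q) ^ (u - m) :=
      pow_le_pow_of_le_one hq1 (by linarith) (Nat.sub_le u m)
    have h2' : 1 - (u:ℝ) * q ≤ (1 - q) ^ u := by
      have := one_add_mul_le_pow (a := -q) (by linarith) u
      have heq : 1 + (u:ℝ) * (-q) = 1 - (u:ℝ) * q := by ring
      rw [heq] at this
      have heq2 : (1 + (-q)) = 1 - q := by ring
      rwa [heq2] at this
    linarith
  -- combine
  set a := (r:ℝ)^2 / (u:ℝ) with hadef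
  set b := (u:ℝ) * q with hbdef
  have ha0 : 0 ≤ a := by positivity
  have hb0 : 0 ≤ b := by positivity
  have hP0 : (0:ℝ) ≤ (u:ℝ) ^ m * q ^ m / (m.factorial : ℝ) := by positivity
  have key1 : ((u:ℝ) * q) ^ m / (m.factorial : ℝ) * (1 - a - b)
      ≤ ((u:ℝ) ^ m * (1 - a) / (m.factorial : ℝ) * q ^ m) * (1 - b) := by
    rw [mul_pow]
    have expand : (u:ℝ) ^ m * q ^ m / (m.factorial : ℝ) * (1 - a - b)
        ≤ (u:ℝ) ^ m * q ^ m / (m.factorial : ℝ) * ((1-a)*(1-b)) := by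
      apply mul_le_mul_of_nonneg_left _ hP0
      nlinarith
    calc (u:ℝ) ^ m * q ^ m / (m.factorial : ℝ) * (1 - a - b)
        ≤ (u:ℝ) ^ m * q ^ m / (m.factorial : ℝ) * ((1-a)*(1-b)) := expand
      _ = ((u:ℝ) ^ m * (1 - a) / (m.factorial : ℝ) * q ^ m) * (1 - b) := by ring
  have key2 : (u:ℝ) ^ m * (1 - a) / (m.factorial : ℝ) * q ^ m
      ≤ (u.choose m : ℝ) * q ^ m := by
    apply mul_le_mul_of_nonneg_right _ (pow_nonneg h0 m)
    rw [div_le_iff₀ (by positivity)]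
    calc (u:ℝ) ^ m * (1 - a) ≤ ((u - r : ℕ) : ℝ) ^ m := hB
      _ ≤ (u.choose m : ℝ) * (m.factorial : ℝ) := hA
  have key3 : ((u.choose m : ℝ) * q ^ m) * (1 - b)
      ≤ ((u.choose m : ℝ) * q ^ m) * (1 - q) ^ (u - m) := by
    apply mul_le_mul_of_nonneg_left _ (by positivity)
    exact hC
  calc ((u:ℝ) * q) ^ m / (m.factorial : ℝ) * (1 - a - b)
      ≤ ((u:ℝ) ^ m * (1 - a) / (m.factorial : ℝ) * q ^ m) * (1 - b) := key1
    _ ≤ ((u.choose m : ℝ) * q ^ m) * (1 - b) := by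
        apply mul_le_mul_of_nonneg_right key2
        nlinarith
    _ ≤ ((u.choose m : ℝ) * q ^ m) * (1 - q) ^ (u - m) := key3
    _ = binomPMF u q m := by unfold binomPMF; ring

lemma sum_piAntidiag_prod (k s : ℕ) (lam : Fin k → ℝ) :
    ∑ m ∈ Finset.piAntidiag Finset.univ s,
      ∏ j, lam j ^ m j / ((m j).factorial : ℝ)
      = (∑ j, lam j) ^ s / (s.factorial : ℝ) := by
  rw [Finset.sum_pow_eq_sum_piAntidiag, Finset.sum_div]
  apply Finset.sum_congr rfl
  intro m hm
  rw [Finset.mem_piAntidiag] at hm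
  have hspec := Nat.multinomial_spec Finset.univ m
  rw [hm.1] at hspec
  have hc : ((∏ j, (m j).factorial : ℕ) : ℝ) * (Nat.multinomial Finset.univ m : ℝ)
      = (s.factorial : ℝ) := by exact_mod_cast hspec
  have hne : ((∏ j, (m j).factorial : ℕ) : ℝ) ≠ 0 := by
    push_cast
    exact ne_of_gt (Finset.prod_pos fun j _ => by positivity)
  have hs : (s.factorial : ℝ) ≠ 0 := by positivity
  rw [Finset.prod_div_distrib]
  rw [div_eq_div_iff (by push_cast at hne ⊢; exact hne) hs]
  push_cast at hc ⊢
  linear_combination (-(∏ j, lam j ^ m j)) * hc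

lemma one_sub_sum_le_prod_one_sub {ι : Type*} (s : Finset ι) (f : ι → ℝ)
    (h0 : ∀ i ∈ s, 0 ≤ f i) (h1 : ∀ i ∈ s, f i ≤ 1) :
    1 - ∑ i ∈ s, f i ≤ ∏ i ∈ s, (1 - f i) := by
  induction s using Finset.cons_induction with
  | empty => simp
  | cons a s ha ih =>
    rw [Finset.sum_cons, Finset.prod_cons]
    have hfa0 := h0 a (Finset.mem_cons_self a s)
    have hfa1 := h1 a (Finset.mem_cons_self a s)
    have ihs := ih (fun i hi => h0 i (Finset.mem_cons.2 (Or.inr hi)))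
      (fun i hi => h1 i (Finset.mem_cons.2 (Or.inr hi)))
    have hsum0 : 0 ≤ ∑ i ∈ s, f i :=
      Finset.sum_nonneg fun i hi => h0 i (Finset.mem_cons.2 (Or.inr hi))
    nlinarith [mul_nonneg (by linarith : (0:ℝ) ≤ 1 - f a)
      (by linarith : (0:ℝ) ≤ ∏ i ∈ s, (1 - f i) - (1 - ∑ i ∈ s, f i))]

lemma geom_tail_bound (r N : ℕ) (S : ℝ) (hS0 : 0 ≤ S) (hS : S ≤ 1/4) :
    ∑ s ∈ Finset.Icc r N, S ^ s / (s.factorial : ℝ)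
      ≤ (S ^ r / (r.factorial : ℝ)) * (1 + 2 * S) := by
  have hP0 : (0:ℝ) ≤ S ^ r / (r.factorial : ℝ) := by positivity
  have hstep1 : ∀ s ∈ Finset.Icc r N, S ^ s / (s.factorial : ℝ)
      ≤ (S ^ r / (r.factorial : ℝ)) * S ^ (s - r) := by
    intro s hs
    rw [Finset.mem_Icc] at hs
    have hfac : (r.factorial : ℝ) ≤ (s.factorial : ℝ) := by
      exact_mod_cast Nat.factorial_le hs.1
    have hss : S ^ s = S ^ r * S ^ (s - r) := by
      rw [← pow_add]; congr 1; omega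
    calc S ^ s / (s.factorial : ℝ) ≤ S ^ s / (r.factorial : ℝ) := by
          gcongr
      _ = (S ^ r / (r.factorial : ℝ)) * S ^ (s - r) := by rw [hss]; ring
  have hstep2 : ∑ s ∈ Finset.Icc r N, (S ^ r / (r.factorial : ℝ)) * S ^ (s - r)
      ≤ (S ^ r / (r.factorial : ℝ)) * (1 + 2 * S) := by
    rcases le_or_gt r N with hrN | hrN
    · have hIcc : Finset.Icc r N = Finset.Ico r (N + 1) := by
        rw [Finset.Ico_add_one_right_eq_Icc]
      rw [hIcc, Finset.sum_Ico_eq_sum_range]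
      have heq : ∀ i, (S ^ r / (r.factorial : ℝ)) * S ^ (r + i - r)
          = (S ^ r / (r.factorial : ℝ)) * S ^ i := by
        intro i; congr 2; omega
      rw [Finset.sum_congr rfl (fun i _ => heq i), ← Finset.mul_sum]
      apply mul_le_mul_of_nonneg_left _ hP0
      have hgs : (∑ i ∈ Finset.range (N + 1 - r), S ^ i) * (S - 1)
          = S ^ (N + 1 - r) - 1 := geom_sum_mul S (N + 1 - r)
      have hpow0 : 0 ≤ S ^ (N + 1 - r) := by positivity
      nlinarith [Finset.sum_nonneg (fun i (_ : i ∈ Finset.range (N + 1 - r)) =>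
        pow_nonneg hS0 i)]
    · rw [Finset.Icc_eq_empty (by omega)]
      simp only [Finset.sum_empty]
      positivity
  calc ∑ s ∈ Finset.Icc r N, S ^ s / (s.factorial : ℝ)
      ≤ ∑ s ∈ Finset.Icc r N, (S ^ r / (r.factorial : ℝ)) * S ^ (s - r) :=
        Finset.sum_le_sum hstep1
    _ ≤ (S ^ r / (r.factorial : ℝ)) * (1 + 2 * S) := hstep2

lemma abs_combine (T P S D Δ rr : ℝ) (hP0 : 0 ≤ P) (hD0 : 0 ≤ D) (hSD : S ≤ D)
    (hΔD : Δ ≤ rr * D) (hrr : 0 ≤ rr) (hupper : T ≤ P * (1 + 2 * S))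
    (hlower : (1 - Δ) * P ≤ T) : |T - P| ≤ (rr + 2) * D * P := by
  rw [abs_sub_le_iff]
  constructor <;>
  nlinarith [mul_le_mul_of_nonneg_right hSD hP0, mul_le_mul_of_nonneg_right hΔD hP0,
    mul_nonneg hD0 hP0, mul_nonneg (mul_nonneg hrr hD0) hP0]

/-- If each `U_j q_j → 0` and `U_j → ∞`, then
`P(∑_j Bin(U_j,q_j) ≥ r) = (1 + O(∑_j (U_j q_j + U_j⁻¹)))·(∑_j U_j q_j)^r / r!`. -/
theorem stmt_10 (r k : ℕ) (hr : 2 ≤ r) (hk : 1 ≤ k)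
    (U : ℕ → Fin k → ℕ) (q : ℕ → Fin k → ℝ)
    (hq : ∀ n j, q n j ∈ Set.Icc (0 : ℝ) 1) (hU : ∀ n j, 1 ≤ U n j)
    (hUlim : ∀ j, Tendsto (fun n => (U n j : ℝ)) atTop atTop)
    (hUq : ∀ j, Tendsto (fun n => (U n j : ℝ) * q n j) atTop (nhds 0)) :
    ∃ C : ℝ, 0 < C ∧ ∀ᶠ n in atTop,
      |sumBinomTail k (U n) (q n) r -
          (∑ j, (U n j : ℝ) * q n j) ^ r / (Nat.factorial r : ℝ)| ≤
        C * (∑ j, ((U n j : ℝ) * q n j + 1 / (U n j : ℝ))) *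
          ((∑ j, (U n j : ℝ) * q n j) ^ r / (Nat.factorial r : ℝ)) := by
  refine ⟨(r:ℝ)^2 + 2, by positivity, ?_⟩
  have hkpos : (0:ℝ) < (k:ℝ) := by exact_mod_cast hk
  -- eventual conditions
  have hev1 : ∀ᶠ n in atTop, ∀ j, (4 * (r:ℝ)^2) ≤ (U n j : ℝ) :=
    eventually_all.2 fun j => (hUlim j).eventually_ge_atTop _
  have hev2 : ∀ᶠ n in atTop, ∀ j, (U n j : ℝ) * q n j < 1 / (4 * k) :=
    eventually_all.2 fun j => (hUq j).eventually_lt_const (by positivity)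
  filter_upwards [hev1, hev2] with n hU4 hlam
  set lam : Fin k → ℝ := fun j => (U n j : ℝ) * q n j with hlamdef
  set S : ℝ := ∑ j, lam j with hSdef
  set P : ℝ := S ^ r / (r.factorial : ℝ) with hPdef
  set D : ℝ := ∑ j, (lam j + 1 / (U n j : ℝ)) with hDdef
  have hq0 : ∀ j, 0 ≤ q n j := fun j => (hq n j).1
  have hq1 : ∀ j, q n j ≤ 1 := fun j => (hq n j).2
  have hU0 : ∀ j, (0:ℝ) < (U n j : ℝ) := fun j => by
    exact_mod_cast Nat.lt_of_lt_of_le Nat.zero_lt_one (hU n j)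
  have hlam0 : ∀ j, 0 ≤ lam j := fun j => mul_nonneg (le_of_lt (hU0 j)) (hq0 j)
  have hS0 : 0 ≤ S := Finset.sum_nonneg fun j _ => hlam0 j
  have hP0 : 0 ≤ P := by positivity
  have hD0 : 0 ≤ D := Finset.sum_nonneg fun j _ => by
    have := hlam0 j; have := hU0 j; positivity
  have hSD : S ≤ D := Finset.sum_le_sum fun j _ => by
    have := hU0 j; have h : 0 ≤ 1 / (U n j : ℝ) := by positivity
    linarith
  have hrR : (2:ℝ) ≤ (r:ℝ) := by exact_mod_cast hr
  have hrU : ∀ j, r ≤ U n j := fun j => by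
    have h4 := hU4 j
    have : (r:ℝ) ≤ (U n j : ℝ) := by nlinarith
    exact_mod_cast this
  have ha14 : ∀ j, (r:ℝ)^2 / (U n j : ℝ) ≤ 1/4 := fun j => by
    rw [div_le_iff₀ (hU0 j)]
    nlinarith [hU4 j]
  have hlam14 : ∀ j, lam j ≤ 1/(4*k) := fun j => le_of_lt (hlam j)
  have hS12 : S ≤ 1/4 := by
    calc S ≤ ∑ _j : Fin k, 1/(4*(k:ℝ)) := Finset.sum_le_sum fun j _ => hlam14 j
      _ = (k:ℝ) * (1/(4*(k:ℝ))) := by rw [Finset.sum_const]; simp [mul_comm]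
      _ = 1/4 := by field_simp
  have hk1R : (1:ℝ) ≤ (k:ℝ) := by exact_mod_cast hk
  have hk14 : (1:ℝ)/(4*k) ≤ 1/4 := by
    rw [div_le_div_iff₀ (by positivity) (by norm_num)]
    nlinarith
  -- the index sets
  set box := (Fintype.piFinset (fun j => Finset.range (U n j + 1))).filter
      (fun m => r ≤ ∑ j, m j) with hboxdef
  have hterm0 : ∀ m : Fin k → ℕ, 0 ≤ ∏ j, binomPMF (U n j) (q n j) (m j) :=
    fun m => Finset.prod_nonneg fun j _ => binomPMF_nonneg _ _ (hq0 j) (hq1 j)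
  -- LOWER BOUND
  have hsub : Finset.piAntidiag Finset.univ r ⊆ box := by
    intro m hm
    rw [Finset.mem_piAntidiag] at hm
    rw [hboxdef, Finset.mem_filter]
    constructor
    · rw [Fintype.mem_piFinset]
      intro j
      rw [Finset.mem_range]
      have hsum : (∑ i, m i) = r := hm.1
      have : m j ≤ ∑ i, m i := Finset.single_le_sum (fun i _ => Nat.zero_le _)
        (Finset.mem_univ j)
      have := hrU j
      omega
    · exact le_of_eq hm.1.symm
  have hlower1 : ∑ m ∈ Finset.piAntidiag Finset.univ r,
      ∏ j, binomPMF (U n j) (q n j) (m j) ≤ sumBinomTail k (U n) (q n) r := by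
    unfold sumBinomTail
    exact Finset.sum_le_sum_of_subset_of_nonneg hsub fun m _ _ => hterm0 m
  set Δ : ℝ := ∑ j, ((r:ℝ)^2 / (U n j : ℝ) + lam j) with hΔdef
  have hlower2 : (1 - Δ) * P ≤ ∑ m ∈ Finset.piAntidiag Finset.univ r,
      ∏ j, binomPMF (U n j) (q n j) (m j) := by
    have hstep : ∀ m ∈ Finset.piAntidiag Finset.univ r,
        (1 - Δ) * ∏ j, lam j ^ m j / ((m j).factorial : ℝ)
          ≤ ∏ j, binomPMF (U n j) (q n j) (m j) := by
      intro m hm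
      rw [Finset.mem_piAntidiag] at hm
      have hmj : ∀ j, m j ≤ r := fun j => by
        have hsum : (∑ i, m i) = r := hm.1
        have : m j ≤ ∑ i, m i := Finset.single_le_sum (fun i _ => Nat.zero_le _)
          (Finset.mem_univ j)
        omega
      have hprodstep : ∏ j, (lam j ^ m j / ((m j).factorial : ℝ) *
          (1 - (r:ℝ)^2 / (U n j : ℝ) - lam j))
            ≤ ∏ j, binomPMF (U n j) (q n j) (m j) := by
        apply Finset.prod_le_prod
        · intro j _
          have h1 := ha14 j
          have h2 := hlam14 j
          have h3 := hk14
          have := hlam0 j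
          have : (0:ℝ) ≤ 1 - (r:ℝ)^2 / (U n j : ℝ) - lam j := by linarith
          positivity
        · intro j _
          exact binomPMF_ge r (U n j) (m j) (hq0 j) (hq1 j) (hmj j)
            (by omega) (hrU j)
            (le_trans (ha14 j) (by norm_num))
            (le_trans (hlam14 j) (le_trans hk14 (by norm_num)))
      have hwei : 1 - Δ ≤ ∏ j, (1 - ((r:ℝ)^2 / (U n j : ℝ) + lam j)) := by
        apply one_sub_sum_le_prod_one_sub
        · intro j _
          have := hlam0 j; have := hU0 j; positivity
        · intro j _
          have h1 := ha14 j; have h2 := hlam14 j; have h3 := hk14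
          linarith
      calc (1 - Δ) * ∏ j, lam j ^ m j / ((m j).factorial : ℝ)
          ≤ (∏ j, (1 - ((r:ℝ)^2 / (U n j : ℝ) + lam j))) *
              ∏ j, lam j ^ m j / ((m j).factorial : ℝ) := by
            apply mul_le_mul_of_nonneg_right hwei
            exact Finset.prod_nonneg fun j _ => by have := hlam0 j; positivity
        _ = ∏ j, (lam j ^ m j / ((m j).factorial : ℝ) *
              (1 - (r:ℝ)^2 / (U n j : ℝ) - lam j)) := by
            rw [← Finset.prod_mul_distrib]
            apply Finset.prod_congr rfl
            intro j _; ring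
        _ ≤ ∏ j, binomPMF (U n j) (q n j) (m j) := hprodstep
    calc (1 - Δ) * P
        = ∑ m ∈ Finset.piAntidiag Finset.univ r,
            (1 - Δ) * ∏ j, lam j ^ m j / ((m j).factorial : ℝ) := by
          rw [← Finset.mul_sum, sum_piAntidiag_prod]
      _ ≤ _ := Finset.sum_le_sum hstep
  have hΔD : Δ ≤ (r:ℝ)^2 * D := by
    rw [hΔdef, hDdef, Finset.mul_sum]
    apply Finset.sum_le_sum
    intro j _
    have h1 := hlam0 j
    have h2 := hU0 j
    have h4 : (r:ℝ)^2/(U n j : ℝ) = (r:ℝ)^2 * (1/(U n j : ℝ)) := by ring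
    have h5 : (0:ℝ) ≤ ((r:ℝ)^2 - 1) * lam j := mul_nonneg (by nlinarith) h1
    rw [h4]
    linarith
  -- UPPER BOUND
  have hupper1 : sumBinomTail k (U n) (q n) r ≤
      ∑ m ∈ box, ∏ j, lam j ^ m j / ((m j).factorial : ℝ) := by
    unfold sumBinomTail
    apply Finset.sum_le_sum
    intro m _
    apply Finset.prod_le_prod
    · intro j _; exact binomPMF_nonneg _ _ (hq0 j) (hq1 j)
    · intro j _; exact binomPMF_le _ _ (hq0 j) (hq1 j)
  set N := ∑ j, U n j with hNdef
  have hfiber : ∑ m ∈ box, ∏ j, lam j ^ m j / ((m j).factorial : ℝ)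
      = ∑ s ∈ Finset.Icc r N, ∑ m ∈ box.filter (fun m => (∑ j, m j) = s),
          ∏ j, lam j ^ m j / ((m j).factorial : ℝ) := by
    rw [Finset.sum_fiberwise_of_maps_to]
    intro m hm
    rw [hboxdef, Finset.mem_filter, Fintype.mem_piFinset] at hm
    rw [Finset.mem_Icc]
    refine ⟨hm.2, Finset.sum_le_sum fun j _ => ?_⟩
    have := hm.1 j
    rw [Finset.mem_range] at this
    omega
  have hfibbound : ∀ s ∈ Finset.Icc r N,
      ∑ m ∈ box.filter (fun m => (∑ j, m j) = s),
        ∏ j, lam j ^ m j / ((m j).factorial : ℝ) ≤ S ^ s / (s.factorial : ℝ) := by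
    intro s _
    rw [← sum_piAntidiag_prod k s lam]
    apply Finset.sum_le_sum_of_subset_of_nonneg
    · intro m hm
      rw [Finset.mem_filter] at hm
      rw [Finset.mem_piAntidiag]
      exact ⟨hm.2, fun i _ => Finset.mem_univ i⟩
    · intro m _ _
      exact Finset.prod_nonneg fun j _ => by have := hlam0 j; positivity
  have hgeom : ∑ s ∈ Finset.Icc r N, S ^ s / (s.factorial : ℝ) ≤ P * (1 + 2 * S) :=
    geom_tail_bound r N S hS0 hS12
  have hupper : sumBinomTail k (U n) (q n) r ≤ P * (1 + 2 * S) := by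
    calc sumBinomTail k (U n) (q n) r
        ≤ ∑ m ∈ box, ∏ j, lam j ^ m j / ((m j).factorial : ℝ) := hupper1
      _ = ∑ s ∈ Finset.Icc r N, ∑ m ∈ box.filter (fun m => (∑ j, m j) = s),
            ∏ j, lam j ^ m j / ((m j).factorial : ℝ) := hfiber
      _ ≤ ∑ s ∈ Finset.Icc r N, S ^ s / (s.factorial : ℝ) :=
          Finset.sum_le_sum hfibbound
      _ ≤ P * (1 + 2 * S) := hgeom
  have hlower : (1 - Δ) * P ≤ sumBinomTail k (U n) (q n) r :=
    le_trans hlower2 hlower1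
  -- combine
  exact abs_combine (sumBinomTail k (U n) (q n) r) P S D Δ ((r:ℝ)^2)
    hP0 hD0 hSD hΔD (sq_nonneg _) hupper hlower
end

section
/- With x_0^{(h)} = ∑_{s=0}^h β_s·1_{K_s}, where β_0 = α_1/2 and β_h = (1/2)·r^{-1}(1-1/r)^{r-1}(χ·β_{h-1})^r, the following holds: ρ_1(x_0^{(h)}) > α_1/2 for every h; if community i is at graph-distance d_i ∈ {1,...,h} from community 1 in the graph induced by the positive entries of χ, then ρ_i(x_0^{(h)}) ≥ (1/2)·r^{-1}(1-1/r)^{r-1}(χ·β_{d_i-1})^r > 0; and if d_i > h+1 then ρ_i(x_0^{(h)}) ≥ α_i ≥ 0. -/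
/-- Properties of the points `x_0^{(h)} = ∑_{s≤h} β_s 1_{K_s}`: `ρ_1(x_0^{(h)}) > α_1/2`
for every `h`; if `1 ≤ d_i ≤ h` then `ρ_i(x_0^{(h)}) ≥ (1/2) r⁻¹(1-1/r)^{r-1}(χ β_{d_i-1})^r > 0`;
and if `d_i > h+1` then `ρ_i(x_0^{(h)}) ≥ α_i ≥ 0`. -/
theorem stmt_13 (r k : ℕ) (hr : 2 ≤ r) (hk : 1 ≤ k)
    (χ : Matrix (Fin k) (Fin k) ℝ) (hχ : ∀ i j, 0 ≤ χ i j) (hχd : ∀ i, χ i i = 1)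
    (hirr : MatIrreducible χ) (hsym : ∀ i j, χ i j = 0 ↔ χ j i = 0)
    (α : Fin k → ℝ) (hα : ∀ i, 0 ≤ α i) (hmono : ∀ i j : Fin k, i ≤ j → α j ≤ α i)
    (hα1 : 0 < α ⟨0, hk⟩)
    (ρ : Fin k → (Fin k → ℝ) → ℝ)
    (hρ : ∀ i x, ρ i x =
      α i - x i + (1 / (r : ℝ)) * (1 - 1 / (r : ℝ)) ^ (r - 1) * (∑ j, χ i j * x j) ^ r)
    -- `d i` is the graph distance of `i` from community `1` (index `0`),
    -- characterized through powers of `χ`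
    (d : Fin k → ℕ)
    (hd : ∀ i, 0 < (χ ^ d i) ⟨0, hk⟩ i ∧ ∀ s < d i, (χ ^ s) ⟨0, hk⟩ i = 0)
    -- `χm` is the least strictly positive entry of `χ`
    (χm : ℝ) (hχm : IsLeast {c : ℝ | ∃ i j, 0 < χ i j ∧ c = χ i j} χm)
    (β : ℕ → ℝ) (hβ0 : β 0 = α ⟨0, hk⟩ / 2)
    (hβ : ∀ h : ℕ, β (h + 1) =
      (1 / 2) * (1 / (r : ℝ)) * (1 - 1 / (r : ℝ)) ^ (r - 1) * (χm * β h) ^ r)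
    (x₀ : ℕ → Fin k → ℝ)
    (hx₀ : ∀ h j, x₀ h j = if d j ≤ h then β (d j) else 0) :
    (∀ h : ℕ, α ⟨0, hk⟩ / 2 < ρ ⟨0, hk⟩ (x₀ h)) ∧
      (∀ h : ℕ, ∀ i, 1 ≤ d i → d i ≤ h →
        (1 / 2) * (1 / (r : ℝ)) * (1 - 1 / (r : ℝ)) ^ (r - 1) * (χm * β (d i - 1)) ^ r ≤
            ρ i (x₀ h) ∧
          0 < (1 / 2) * (1 / (r : ℝ)) * (1 - 1 / (r : ℝ)) ^ (r - 1) * (χm * β (d i - 1)) ^ r) ∧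
      ∀ h : ℕ, ∀ i, h + 1 < d i → α i ≤ ρ i (x₀ h) := by
  set z : Fin k := ⟨0, hk⟩ with hzdef
  have hr2 : (2:ℝ) ≤ (r:ℝ) := by exact_mod_cast hr
  have hrpos : (0:ℝ) < (r:ℝ) := by linarith
  have h1r : (0:ℝ) < 1 - 1/(r:ℝ) := by
    have : 1/(r:ℝ) ≤ 1/2 := by
      apply div_le_div_of_nonneg_left (by norm_num) (by norm_num) hr2
    linarith
  have hC : 0 < (1/(r:ℝ)) * (1 - 1/(r:ℝ)) ^ (r-1) := by positivity
  have hχm_pos : 0 < χm := by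
    obtain ⟨i, j, hpos, heq⟩ := hχm.1
    rw [heq]; exact hpos
  have hχm_le : ∀ i j, 0 < χ i j → χm ≤ χ i j := fun i j h => hχm.2 ⟨i, j, h, rfl⟩
  have hpow : ∀ m : ℕ, ∀ i j, 0 ≤ (χ ^ m) i j := by
    intro m
    induction m with
    | zero =>
      intro i j
      simp only [pow_zero, Matrix.one_apply]
      split <;> norm_num
    | succ n ih =>
      intro i j
      rw [pow_succ, Matrix.mul_apply]
      exact Finset.sum_nonneg fun l _ => mul_nonneg (ih i l) (hχ l j)
  have hd0 : d z = 0 := by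
    by_contra hne
    have h0 := (hd z).2 0 (Nat.pos_of_ne_zero hne)
    simp [Matrix.one_apply] at h0
  have hβpos : ∀ s, 0 < β s := by
    intro s
    induction s with
    | zero => rw [hβ0]; linarith
    | succ n ih => rw [hβ n]; positivity
  have hx₀nn : ∀ h j, 0 ≤ x₀ h j := by
    intro h j
    rw [hx₀]
    split
    · exact (hβpos _).le
    · exact le_refl 0
  have hSnn : ∀ h i, 0 ≤ ∑ j, χ i j * x₀ h j := fun h i =>
    Finset.sum_nonneg fun j _ => mul_nonneg (hχ i j) (hx₀nn h j)
  -- lower bound on the sum by a single term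
  have hSterm : ∀ h i l, χ i l * x₀ h l ≤ ∑ j, χ i j * x₀ h j := by
    intro h i l
    exact Finset.single_le_sum (fun j _ => mul_nonneg (hχ i j) (hx₀nn h j))
      (Finset.mem_univ l)
  refine ⟨?_, ?_, ?_⟩
  · -- Part 1
    intro h
    have hx0z : x₀ h z = α z / 2 := by
      rw [hx₀, hd0, if_pos (Nat.zero_le h), hβ0]
    have hS : α z / 2 ≤ ∑ j, χ z j * x₀ h j := by
      have := hSterm h z z
      rw [hχd z, hx0z, one_mul] at this
      exact this
    have hSpos : 0 < (∑ j, χ z j * x₀ h j) ^ r :=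
      pow_pos (lt_of_lt_of_le (by linarith) hS) r
    rw [hρ, hx0z]
    nlinarith [mul_pos hC hSpos]
  · -- Part 2
    intro h i h1 h2
    have hposconst : 0 < (1/2) * (1/(r:ℝ)) * (1 - 1/(r:ℝ)) ^ (r-1) * (χm * β (d i - 1)) ^ r := by
      have := hβpos (d i - 1)
      positivity
    refine ⟨?_, hposconst⟩
    -- find a neighbor l at distance d i - 1
    set m := d i with hm
    have hm1 : m - 1 + 1 = m := Nat.succ_pred_eq_of_pos h1
    have hent : 0 < (χ ^ m) z i := (hd i).1
    have hsplit : (χ ^ m) z i = ∑ l, (χ ^ (m-1)) z l * χ l i := by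
      conv_lhs => rw [← hm1, pow_succ, Matrix.mul_apply]
    obtain ⟨l, _, hlne⟩ : ∃ l ∈ Finset.univ, (χ ^ (m-1)) z l * χ l i ≠ 0 := by
      apply Finset.exists_ne_zero_of_sum_ne_zero
      rw [← hsplit]; exact ne_of_gt hent
    have hterm_nn : 0 ≤ (χ ^ (m-1)) z l * χ l i := mul_nonneg (hpow _ z l) (hχ l i)
    have hl1 : 0 < (χ ^ (m-1)) z l := by
      rcases lt_or_eq_of_le (hpow (m-1) z l) with hlt | heq
      · exact hlt
      · exfalso; apply hlne; rw [← heq, zero_mul]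
    have hl2 : 0 < χ l i := by
      rcases lt_or_eq_of_le (hχ l i) with hlt | heq
      · exact hlt
      · exfalso; apply hlne; rw [← heq, mul_zero]
    have hdl_le : d l ≤ m - 1 := by
      by_contra hlt
      exact absurd ((hd l).2 (m-1) (Nat.lt_of_not_le hlt)) (ne_of_gt hl1)
    have hdl_ge : m - 1 ≤ d l := by
      by_contra hlt
      push_neg at hlt
      have hstep : 0 < (χ ^ (d l + 1)) z i := by
        have h1' : (χ ^ (d l)) z l * χ l i ≤ (χ ^ (d l + 1)) z i := by
          rw [pow_succ, Matrix.mul_apply]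
          exact Finset.single_le_sum (f := fun j => (χ ^ (d l)) z j * χ j i)
            (fun j _ => mul_nonneg (hpow _ z j) (hχ j i)) (Finset.mem_univ l)
        exact lt_of_lt_of_le (mul_pos (hd l).1 hl2) h1'
      have : (χ ^ (d l + 1)) z i = 0 := by
        apply (hd i).2
        omega
      exact absurd this (ne_of_gt hstep)
    have hdl : d l = m - 1 := le_antisymm hdl_le hdl_ge
    have hχil : 0 < χ i l := by
      rcases lt_or_eq_of_le (hχ i l) with hlt | heq
      · exact hlt
      · exact absurd ((hsym i l).mp heq.symm) (ne_of_gt hl2)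
    have hx0l : x₀ h l = β (m - 1) := by
      rw [hx₀, hdl, if_pos (by omega)]
    have hS : χm * β (m - 1) ≤ ∑ j, χ i j * x₀ h j := by
      calc χm * β (m - 1) ≤ χ i l * β (m - 1) :=
            mul_le_mul_of_nonneg_right (hχm_le i l hχil) (hβpos _).le
        _ = χ i l * x₀ h l := by rw [hx0l]
        _ ≤ _ := hSterm h i l
    have hSpow : (χm * β (m - 1)) ^ r ≤ (∑ j, χ i j * x₀ h j) ^ r :=
      pow_le_pow_left₀ (mul_nonneg hχm_pos.le (hβpos _).le) hS r
    have hx0i : x₀ h i = β m := by rw [hx₀, if_pos h2]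
    have hβi : β m = (1/2) * (1/(r:ℝ)) * (1 - 1/(r:ℝ)) ^ (r-1) * (χm * β (m-1)) ^ r := by
      conv_lhs => rw [← hm1]
      exact hβ (m-1)
    rw [hρ, hx0i]
    have hαi := hα i
    nlinarith [mul_le_mul_of_nonneg_left hSpow hC.le]
  · -- Part 3
    intro h i hgt
    have hx0i : x₀ h i = 0 := by
      rw [hx₀, if_neg (by omega)]
    rw [hρ, hx0i]
    have : 0 ≤ (1/(r:ℝ)) * (1 - 1/(r:ℝ)) ^ (r-1) * (∑ j, χ i j * x₀ h j) ^ r :=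
      mul_nonneg hC.le (pow_nonneg (hSnn h i) r)
    linarith
end

section
/- If α_1 ≥ 1 and k ≥ 2, then the vector field ρ has no zeros in the region D_ρ = {x ∈ D : ρ_1(x) = ... = ρ_k(x)} with common value ≤ 0; equivalently min over D_ρ of ρ_1 is strictly positive. In particular, if α_1 = 1, the unique zero z = (r/(r-1), 0, ..., 0) of ρ_1 in [0, r/(r-1)]^k satisfies ρ_j(z) > 0 for some j ≥ 2, so z ∉ D_ρ. -/
private lemma geom_bound {r : ℕ} (hr : 2 ≤ r) {t : ℝ} (h0 : 0 ≤ t) (h1 : t ≤ 1) :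
    1 - t ^ r ≤ r * (1 - t) := by
  have hgs : (1 - t) * ∑ i ∈ Finset.range r, t ^ i = 1 - t ^ r := by
    linear_combination -geom_sum_mul t r
  have hsum : ∑ i ∈ Finset.range r, t ^ i ≤ (r : ℝ) := by
    calc ∑ i ∈ Finset.range r, t ^ i ≤ ∑ i ∈ Finset.range r, (1:ℝ) :=
          Finset.sum_le_sum fun i _ => pow_le_one₀ h0 h1
      _ = r := by simp
  calc 1 - t ^ r = (1 - t) * ∑ i ∈ Finset.range r, t ^ i := hgs.symm
    _ ≤ (1 - t) * r := mul_le_mul_of_nonneg_left hsum (by linarith)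
    _ = r * (1 - t) := by ring

private lemma geom_bound_strict {r : ℕ} (hr : 2 ≤ r) {t : ℝ} (h0 : 0 ≤ t) (h1 : t < 1) :
    1 - t ^ r < r * (1 - t) := by
  have hgs : (1 - t) * ∑ i ∈ Finset.range r, t ^ i = 1 - t ^ r := by
    linear_combination -geom_sum_mul t r
  have hsum : ∑ i ∈ Finset.range r, t ^ i < (r : ℝ) := by
    calc ∑ i ∈ Finset.range r, t ^ i < ∑ i ∈ Finset.range r, (1:ℝ) := by
          apply Finset.sum_lt_sum (fun i _ => pow_le_one₀ h0 h1.le)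
          exact ⟨1, Finset.mem_range.mpr (by omega), by simpa using h1⟩
      _ = r := by simp
  calc 1 - t ^ r = (1 - t) * ∑ i ∈ Finset.range r, t ^ i := hgs.symm
    _ < (1 - t) * r := by
        apply mul_lt_mul_of_pos_left hsum (by linarith)
    _ = r * (1 - t) := by ring

private lemma cMr_eq {r : ℕ} (hr : 2 ≤ r) :
    (1 / (r : ℝ)) * (1 - 1 / (r : ℝ)) ^ (r - 1) * ((r : ℝ) / ((r : ℝ) - 1)) ^ r
      = 1 / ((r : ℝ) - 1) := by
  obtain ⟨m, rfl⟩ : ∃ m, r = m + 1 := ⟨r - 1, by omega⟩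
  have hR2 : (2:ℝ) ≤ ((m+1 : ℕ) : ℝ) := by exact_mod_cast hr
  set R : ℝ := ((m+1:ℕ):ℝ) with hR
  have hR0 : R ≠ 0 := by nlinarith
  have hR1 : R - 1 ≠ 0 := by nlinarith
  simp only [Nat.add_sub_cancel]
  rw [show (1:ℝ) - 1 / R = (R - 1) / R by field_simp]
  have h1 : ((R-1)/R) * (R/(R-1)) = 1 := by field_simp
  calc (1/R) * ((R-1)/R)^m * (R/(R-1))^(m+1)
      = (1/R) * (R/(R-1)) * (((R-1)/R) * (R/(R-1)))^m := by
        rw [mul_pow, pow_succ]; ring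
    _ = 1/(R-1) := by rw [h1, one_pow]; field_simp

private lemma key_ineq {r : ℕ} (hr : 2 ≤ r) {s : ℝ} (hs0 : 0 ≤ s)
    (hsM : s ≤ (r : ℝ) / ((r : ℝ) - 1)) :
    0 ≤ 1 - s + (1 / (r : ℝ)) * (1 - 1 / (r : ℝ)) ^ (r - 1) * s ^ r ∧
    (s < (r : ℝ) / ((r : ℝ) - 1) →
      0 < 1 - s + (1 / (r : ℝ)) * (1 - 1 / (r : ℝ)) ^ (r - 1) * s ^ r) := by
  have hR2 : (2:ℝ) ≤ (r:ℝ) := by exact_mod_cast hr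
  have hR1 : (0:ℝ) < (r:ℝ) - 1 := by linarith
  have hR0 : (0:ℝ) < (r:ℝ) := by linarith
  set R : ℝ := (r:ℝ) with hRdef
  set t : ℝ := s * (R - 1) / R with ht
  have ht0 : 0 ≤ t := by positivity
  have ht1 : t ≤ 1 := by
    rw [ht, div_le_one hR0]
    rw [le_div_iff₀ hR1] at hsM
    linarith
  have hts : s = t * (R / (R - 1)) := by
    rw [ht]; field_simp
  have hkey : (1 / R) * (1 - 1 / R) ^ (r-1) * s ^ r = t ^ r / (R - 1) := by
    obtain ⟨m, hm⟩ : ∃ m, r = m + 1 := ⟨r - 1, by omega⟩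
    subst hm
    simp only [Nat.add_sub_cancel]
    rw [ht, show (1:ℝ) - 1 / R = (R - 1) / R by field_simp]
    rw [div_pow, div_pow, mul_pow]
    field_simp
    ring
  have hexpr : 1 - s + (1 / R) * (1 - 1 / R) ^ (r-1) * s ^ r
      = (R * (1 - t) - (1 - t ^ r)) / (R - 1) := by
    rw [hkey, hts]
    field_simp
    ring
  constructor
  · rw [hexpr]
    apply div_nonneg _ hR1.le
    have := geom_bound hr ht0 ht1
    linarith
  · intro hlt
    have htlt : t < 1 := by
      rw [ht, div_lt_one hR0]
      rw [lt_div_iff₀ hR1] at hlt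
      linarith
    rw [hexpr]
    apply div_pos _ hR1
    have := geom_bound_strict hr ht0 htlt
    linarith

private lemma exists_out {k : ℕ} (χ : Matrix (Fin k) (Fin k) ℝ) (hχ : ∀ i j, 0 ≤ χ i j)
    (hirr : MatIrreducible χ) {i j : Fin k} (hij : j ≠ i) :
    ∃ l, l ≠ i ∧ 0 < χ i l := by
  by_contra h
  push_neg at h
  have h0 : ∀ l, l ≠ i → χ i l = 0 := fun l hl => le_antisymm (h l hl) (hχ i l)
  have hind : ∀ m l, l ≠ i → (χ ^ m) i l = 0 := by
    intro m
    induction m with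
    | zero => intro l hl; simp [Matrix.one_apply_ne (Ne.symm hl)]
    | succ n ih =>
        intro l hl
        rw [pow_succ, Matrix.mul_apply]
        apply Finset.sum_eq_zero
        intro a _
        by_cases ha : a = i
        · subst ha; rw [h0 l hl]; ring
        · rw [ih a ha, zero_mul]
  obtain ⟨m, hm⟩ := hirr i j
  rw [hind m j hij] at hm
  exact lt_irrefl 0 hm

private lemma exists_in {k : ℕ} (χ : Matrix (Fin k) (Fin k) ℝ) (hχ : ∀ i j, 0 ≤ χ i j)
    (hirr : MatIrreducible χ) {i j : Fin k} (hij : j ≠ i) :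
    ∃ l, l ≠ i ∧ 0 < χ l i := by
  by_contra h
  push_neg at h
  have h0 : ∀ l, l ≠ i → χ l i = 0 := fun l hl => le_antisymm (h l hl) (hχ l i)
  have hind : ∀ m l, l ≠ i → (χ ^ m) l i = 0 := by
    intro m
    induction m with
    | zero => intro l hl; simp [Matrix.one_apply_ne hl]
    | succ n ih =>
        intro l hl
        rw [pow_succ', Matrix.mul_apply]
        apply Finset.sum_eq_zero
        intro a _
        by_cases ha : a = i
        · subst ha; rw [h0 l hl]; ring
        · rw [ih a ha, mul_zero]
  obtain ⟨m, hm⟩ := hirr j i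
  rw [hind m j hij] at hm
  exact lt_irrefl 0 hm


/-- If `α_1 ≥ 1` and `k ≥ 2`, then `ρ_1 > 0` on `D_ρ = {x ∈ D : ρ_1(x) = ⋯ = ρ_k(x)}`
(super-criticality). In particular, for `α_1 = 1` the unique zero
`z = (r/(r-1),0,…,0)` of `ρ_1` satisfies `ρ_j(z) > 0` for some `j ≠ 1`, so `z ∉ D_ρ`. -/
theorem stmt_14 (r k : ℕ) (hr : 2 ≤ r) (hk : 2 ≤ k)
    (χ : Matrix (Fin k) (Fin k) ℝ) (hχ : ∀ i j, 0 ≤ χ i j) (hχd : ∀ i, χ i i = 1)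
    (hirr : MatIrreducible χ)
    (α : Fin k → ℝ) (hα : ∀ i, 0 ≤ α i)
    (hα1 : 1 ≤ α ⟨0, by omega⟩)
    (ρ : Fin k → (Fin k → ℝ) → ℝ)
    (hρ : ∀ i x, ρ i x =
      α i - x i + (1 / (r : ℝ)) * (1 - 1 / (r : ℝ)) ^ (r - 1) * (∑ j, χ i j * x j) ^ r)
    (D Dρ : Set (Fin k → ℝ))
    (hD : D = {x | (∀ i, x i ∈ Set.Icc (0 : ℝ) ((r : ℝ) / ((r : ℝ) - 1))) ∧
      ∀ i, x i + ∑ j ∈ Finset.univ.erase i, χ i j * x j ≤ (r : ℝ) / ((r : ℝ) - 1)})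
    (hDρ : Dρ = {x | x ∈ D ∧ ∀ i j : Fin k, ρ i x = ρ j x})
    (z : Fin k → ℝ)
    (hz : z = fun i => if i = (⟨0, by omega⟩ : Fin k) then (r : ℝ) / ((r : ℝ) - 1) else 0) :
    (∀ x ∈ Dρ, 0 < ρ ⟨0, by omega⟩ x) ∧
      (α ⟨0, by omega⟩ = 1 →
        (∃ j : Fin k, j ≠ ⟨0, by omega⟩ ∧ 0 < ρ j z) ∧ z ∉ Dρ) := by
  have hk0 : 0 < k := by omega
  set i0 : Fin k := ⟨0, by omega⟩ with hi0def
  set i1 : Fin k := ⟨1, by omega⟩ with hi1def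
  have hi10 : i1 ≠ i0 := by
    simp [hi0def, hi1def, Fin.ext_iff]
  have hR2 : (2:ℝ) ≤ (r:ℝ) := by exact_mod_cast hr
  have hR1 : (0:ℝ) < (r:ℝ) - 1 := by linarith
  have hR0 : (0:ℝ) < (r:ℝ) := by linarith
  have hMpos : 0 < (r:ℝ) / ((r:ℝ) - 1) := div_pos hR0 hR1
  have hMid : (r:ℝ) / ((r:ℝ) - 1) = 1 + 1 / ((r:ℝ) - 1) := by field_simp; ring
  have hcpos : 0 < (1 / (r:ℝ)) * (1 - 1 / (r:ℝ)) ^ (r - 1) := by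
    apply mul_pos (by positivity)
    apply pow_pos
    rw [show (1:ℝ) - 1 / (r:ℝ) = ((r:ℝ) - 1) / (r:ℝ) by field_simp]
    positivity
  have main : ∀ x ∈ Dρ, 0 < ρ i0 x := by
    intro x hx
    rw [hDρ] at hx
    obtain ⟨hxD, hxeq⟩ := hx
    rw [hD] at hxD
    obtain ⟨hbox, hcon⟩ := hxD
    have hterm : ∀ i j, 0 ≤ χ i j * x j := fun i j => mul_nonneg (hχ i j) (hbox j).1
    have hs_eq : ∀ i, (∑ j, χ i j * x j)
        = x i + ∑ j ∈ Finset.univ.erase i, χ i j * x j := by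
      intro i
      rw [← Finset.add_sum_erase Finset.univ _ (Finset.mem_univ i), hχd i, one_mul]
    have hs0 : ∀ i, 0 ≤ ∑ j, χ i j * x j :=
      fun i => Finset.sum_nonneg fun j _ => hterm i j
    have hsM : ∀ i, (∑ j, χ i j * x j) ≤ (r:ℝ) / ((r:ℝ) - 1) := by
      intro i; rw [hs_eq i]; exact hcon i
    have hxle : ∀ i, x i ≤ ∑ j, χ i j * x j := by
      intro i
      rw [hs_eq i]
      have h0 : 0 ≤ ∑ j ∈ Finset.univ.erase i, χ i j * x j :=
        Finset.sum_nonneg fun j _ => hterm i j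
      linarith
    by_contra hle
    push_neg at hle
    have hkey := key_ineq hr (hs0 i0) (hsM i0)
    have hρ0 : 0 ≤ ρ i0 x := by
      rw [hρ]
      have h1 := hkey.1
      have h2 := hxle i0
      linarith [hα1]
    have hzero : ρ i0 x = 0 := le_antisymm hle hρ0
    have hall : ∀ i, ρ i x = 0 := fun i => (hxeq i i0).trans hzero
    have hzero' := hzero
    rw [hρ] at hzero'
    have hsM1 : (∑ j, χ i0 j * x j) = (r:ℝ) / ((r:ℝ) - 1) := by
      by_contra hne
      have hlt : (∑ j, χ i0 j * x j) < (r:ℝ) / ((r:ℝ) - 1) := lt_of_le_of_ne (hsM i0) hne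
      have h3 := hkey.2 hlt
      have h2 := hxle i0
      linarith [hα1]
    have hxi0 : x i0 = (r:ℝ) / ((r:ℝ) - 1) := by
      rw [hsM1, cMr_eq hr] at hzero'
      have hub := (hbox i0).2
      linarith [hα1]
    have hsum0 : ∑ j ∈ Finset.univ.erase i0, χ i0 j * x j = 0 := by
      have h4 := hs_eq i0
      rw [hsM1, hxi0] at h4
      linarith
    have hterm0 : ∀ j ∈ Finset.univ.erase i0, χ i0 j * x j = 0 :=
      (Finset.sum_eq_zero_iff_of_nonneg (fun j _ => hterm i0 j)).1 hsum0
    have hxpos0 : x i0 ≠ 0 := by rw [hxi0]; exact ne_of_gt hMpos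
    have hZ : ∀ a, x a = 0 → ∀ j, χ a j * x j = 0 := by
      intro a ha j
      have h0 := hall a
      rw [hρ, ha] at h0
      have h1 : 0 ≤ (∑ j, χ a j * x j) ^ r := pow_nonneg (hs0 a) r
      have h2 : (1 / (r:ℝ)) * (1 - 1 / (r:ℝ)) ^ (r - 1) * (∑ j, χ a j * x j) ^ r = 0 := by
        nlinarith [hα a, mul_nonneg hcpos.le h1]
      have h3 : (∑ j, χ a j * x j) ^ r = 0 := by
        rcases mul_eq_zero.1 h2 with h | h
        · exact absurd h (ne_of_gt hcpos)
        · exact h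
      have h4 : (∑ j, χ a j * x j) = 0 := pow_eq_zero_iff (by omega) |>.1 h3
      exact (Finset.sum_eq_zero_iff_of_nonneg (fun j _ => hterm a j)).1 h4 j (Finset.mem_univ j)
    have hind : ∀ m, ∀ a, x a = 0 → (χ ^ m) a i0 = 0 := by
      intro m
      induction m with
      | zero =>
          intro a ha
          have hne : a ≠ i0 := fun h => hxpos0 (h ▸ ha)
          simp [Matrix.one_apply_ne hne]
      | succ n ih =>
          intro a ha
          rw [pow_succ', Matrix.mul_apply]
          apply Finset.sum_eq_zero
          intro j _
          by_cases hj : χ a j = 0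
          · rw [hj, zero_mul]
          · have hxj : x j = 0 := by
              rcases mul_eq_zero.1 (hZ a ha j) with h | h
              · exact absurd h hj
              · exact h
            rw [ih j hxj, mul_zero]
    obtain ⟨l, hl, hlpos⟩ := exists_out χ hχ hirr hi10
    have hxl : x l = 0 := by
      have h5 : χ i0 l * x l = 0 :=
        hterm0 l (Finset.mem_erase.mpr ⟨hl, Finset.mem_univ l⟩)
      rcases mul_eq_zero.1 h5 with h | h
      · exact absurd h (ne_of_gt hlpos)
      · exact h
    obtain ⟨m, hm⟩ := hirr l i0
    rw [hind m l hxl] at hm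
    exact lt_irrefl 0 hm
  refine ⟨main, fun hα1' => ?_⟩
  obtain ⟨j, hj, hjpos⟩ := exists_in χ hχ hirr hi10
  have hsz : ∀ i, (∑ l, χ i l * z l) = χ i i0 * ((r:ℝ) / ((r:ℝ) - 1)) := by
    intro i
    have h6 : ∀ l, χ i l * z l
        = if l = i0 then χ i i0 * ((r:ℝ) / ((r:ℝ) - 1)) else 0 := by
      intro l
      rw [hz]
      by_cases h : l = i0 <;> simp [h]
    simp only [h6, Finset.sum_ite_eq', Finset.mem_univ, if_true]
  have hρjz : 0 < ρ j z := by
    rw [hρ, hsz j]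
    have hzj : z j = 0 := by rw [hz]; simp [hj]
    rw [hzj]
    have h7 : 0 < (χ j i0 * ((r:ℝ) / ((r:ℝ) - 1))) ^ r :=
      pow_pos (mul_pos hjpos hMpos) r
    have h8 := mul_pos hcpos h7
    linarith [hα j]
  refine ⟨⟨j, hj, hρjz⟩, fun hmem => ?_⟩
  have hρ0z : ρ i0 z = 0 := by
    rw [hρ, hsz i0, hχd i0, one_mul, cMr_eq hr]
    have hzi0 : z i0 = (r:ℝ) / ((r:ℝ) - 1) := by rw [hz]; simp
    rw [hzi0, hα1']
    linarith
  have := main z hmem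
  rw [hρ0z] at this
  exact lt_irrefl 0 this
end
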